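/- (Energy dissipation of the variable-step backward Euler scheme for the classical Swift–Hohenberg equation.) Let g ≥ 0, ε > 0 and suppose the maximum time step satisfies τ ≤ 3/(4g² + 3ε). If u⁰, …, u^N ∈ V_h satisfy (u^n − u^{n−1})/τ_n = −μ^n with μ^n := (1+Δ_h)² u^n + f(u^n) for 1 ≤ n ≤ N, then (E[u^n] − E[u^{n−1}])/τ_n + ½‖μ^n‖² ≤ 0 for every 1 ≤ n ≤ N. -/

import Mathlib

open scoped BigOperators

/-- discrete Laplacian on `L`-periodic grid functions (indices mod `M`) -/
noncomputable def dLap (M : ℕ) (h : ℝ) (v : ZMod M → ZMod M → ℝ) : ZMod M → ZMod M → ℝ :=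
  fun i j => (v (i + 1) j + v (i - 1) j + v i (j + 1) + v i (j - 1) - 4 * v i j) / h ^ 2

/-- discrete inner product ⟨v,w⟩ = h² Σ_{ij} v_{ij} w_{ij} -/
noncomputable def dInner (M : ℕ) [NeZero M] (h : ℝ) (v w : ZMod M → ZMod M → ℝ) : ℝ :=
  h ^ 2 * ∑ i : ZMod M, ∑ j : ZMod M, v i j * w i j

/-- discrete L² norm -/
noncomputable def dNorm (M : ℕ) [NeZero M] (h : ℝ) (v : ZMod M → ZMod M → ℝ) : ℝ :=
  Real.sqrt (dInner M h v v)

/-- the operator (1+Δ_h) -/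
noncomputable def opA (M : ℕ) (h : ℝ) (v : ZMod M → ZMod M → ℝ) : ZMod M → ZMod M → ℝ :=
  v + dLap M h v

/-- pointwise nonlinearity f(u) = u³ - g u² - ε u -/
noncomputable def fPt (g ε : ℝ) (M : ℕ) (v : ZMod M → ZMod M → ℝ) : ZMod M → ZMod M → ℝ :=
  fun i j => (v i j) ^ 3 - g * (v i j) ^ 2 - ε * v i j

/-- discrete energy E[v] = ½‖(1+Δ_h)v‖² + ¼‖v‖₄⁴ - (g/3)⟨v²,v⟩ - (ε/2)‖v‖² -/
noncomputable def dEnergy (M : ℕ) [NeZero M] (h g ε : ℝ) (v : ZMod M → ZMod M → ℝ) : ℝ :=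
  (1 / 2) * dInner M h (opA M h v) (opA M h v)
    + (1 / 4) * (h ^ 2 * ∑ i : ZMod M, ∑ j : ZMod M, |v i j| ^ 4)
    - (g / 3) * dInner M h (fun i j => (v i j) ^ 2) v
    - (ε / 2) * dInner M h v v

/-- chemical potential μ = (1+Δ_h)² v + f(v) -/
noncomputable def muSH (M : ℕ) (h g ε : ℝ) (v : ZMod M → ZMod M → ℝ) : ZMod M → ZMod M → ℝ :=
  opA M h (opA M h v) + fPt g ε M v

/-!
Write `v = uⁿ⁻¹ = uⁿ + τ μ` with `u = uⁿ`, `A = 1 + Δ_h` and `C = g²/6 + ε/2`.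
Since `A` is self-adjoint, `½‖Au‖² - ½‖Av‖² = -τ⟨A²u, μ⟩ - ½τ²‖Aμ‖²`, and a pointwise
Taylor bound for the quartic potential `F` gives `F(u) - F(v) ≤ -τ f(u) μ + C τ² μ²`.
As `μ = A²u + f(u)`, these add up to `E[u] - E[v] ≤ -τ(1 - Cτ)‖μ‖²`, and the step restriction
makes `Cτ ≤ ½`.
-/

open Finset

theorem sum_apply_add_eq_sum_apply_sub {G β : Type*} [AddGroup G] [Fintype G] [AddCommMonoid β]
    (F : G → G → β) (a : G) : ∑ i, F (i + a) i = ∑ i, F i (i - a) := by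
  simpa using ((Equiv.subRight a).sum_comp fun i => F (i + a) i).symm

theorem opA_add_smul {M : ℕ} (h : ℝ) (v w : ZMod M → ZMod M → ℝ) (τ : ℝ) :
    opA M h (v + τ • w) = opA M h v + τ • opA M h w := by
  funext i j
  simp only [opA, dLap, Pi.add_apply, Pi.smul_apply, smul_eq_mul]
  ring

noncomputable def potentialSH (g ε a : ℝ) : ℝ := a ^ 4 / 4 - g / 3 * a ^ 3 - ε / 2 * a ^ 2

theorem potentialSH_sub_le (g ε a d : ℝ) :
    potentialSH g ε a - potentialSH g ε (a + d)
      ≤ -((a ^ 3 - g * a ^ 2 - ε * a) * d) + (g ^ 2 / 6 + ε / 2) * d ^ 2 := by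
  have taylor : potentialSH g ε (a + d) - potentialSH g ε a - (a ^ 3 - g * a ^ 2 - ε * a) * d
      + (g ^ 2 / 6 + ε / 2) * d ^ 2 = d ^ 2 * ((d / 2 + a - g / 3) ^ 2 + (a - g / 3) ^ 2 / 2) := by
    unfold potentialSH
    ring
  linarith [mul_nonneg (sq_nonneg d) (add_nonneg (sq_nonneg (d / 2 + a - g / 3))
    (div_nonneg (sq_nonneg (a - g / 3)) zero_le_two))]

section Grid

variable {M : ℕ} [NeZero M] (h : ℝ)

theorem dInner_comm (v w : ZMod M → ZMod M → ℝ) : dInner M h v w = dInner M h w v := by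
  simp only [dInner, mul_comm (v _ _)]

theorem dInner_add_left (v v' w : ZMod M → ZMod M → ℝ) :
    dInner M h (v + v') w = dInner M h v w + dInner M h v' w := by
  simp only [dInner, Pi.add_apply, add_mul, sum_add_distrib, mul_add]

theorem dInner_self_nonneg (v : ZMod M → ZMod M → ℝ) : 0 ≤ dInner M h v v :=
  mul_nonneg (sq_nonneg h) (sum_nonneg fun _ _ => sum_nonneg fun _ _ => mul_self_nonneg _)

theorem dInner_add_smul_self (v w : ZMod M → ZMod M → ℝ) (τ : ℝ) :
    dInner M h (v + τ • w) (v + τ • w)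
      = dInner M h v v + 2 * τ * dInner M h v w + τ ^ 2 * dInner M h w w := by
  simp only [dInner, Pi.add_apply, Pi.smul_apply, smul_eq_mul, mul_sum, ← sum_add_distrib]
  refine sum_congr rfl fun i _ => sum_congr rfl fun j _ => ?_
  ring

theorem dInner_dLap_left (v w : ZMod M → ZMod M → ℝ) :
    dInner M h (dLap M h v) w = dInner M h v (dLap M h w) := by
  have row_up : ∑ i, ∑ j, v (i + 1) j * w i j = ∑ i, ∑ j, v i j * w (i - 1) j :=
    sum_apply_add_eq_sum_apply_sub (fun i i' => ∑ j, v i j * w i' j) 1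
  have row_down : ∑ i, ∑ j, v (i - 1) j * w i j = ∑ i, ∑ j, v i j * w (i + 1) j := by
    simpa [← sub_eq_add_neg] using
      sum_apply_add_eq_sum_apply_sub (fun i i' => ∑ j, v i j * w i' j) (-1)
  have col_up : ∑ i, ∑ j, v i (j + 1) * w i j = ∑ i, ∑ j, v i j * w i (j - 1) :=
    sum_congr rfl fun i _ => sum_apply_add_eq_sum_apply_sub (fun j j' => v i j * w i j') 1
  have col_down : ∑ i, ∑ j, v i (j - 1) * w i j = ∑ i, ∑ j, v i j * w i (j + 1) :=
    sum_congr rfl fun i _ => by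
      simpa [← sub_eq_add_neg] using
        sum_apply_add_eq_sum_apply_sub (fun j j' => v i j * w i j') (-1)
  simp only [dInner, dLap, div_mul_eq_mul_div, mul_div_assoc', add_mul, mul_add, sub_mul,
    mul_sub, ← sum_div, sum_add_distrib, sum_sub_distrib]
  rw [row_up, row_down, col_up, col_down]
  simp only [mul_assoc, mul_left_comm (v _ _) (4 : ℝ), ← mul_sum]
  ring

theorem dInner_opA_left (v w : ZMod M → ZMod M → ℝ) :
    dInner M h (opA M h v) w = dInner M h v (opA M h w) := by
  rw [opA, opA, dInner_add_left, dInner_dLap_left, dInner_comm h v, dInner_comm h v,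
    ← dInner_add_left, dInner_comm]

variable {g ε : ℝ}

theorem dEnergy_eq (v : ZMod M → ZMod M → ℝ) :
    dEnergy M h g ε v
      = 1 / 2 * dInner M h (opA M h v) (opA M h v) + h ^ 2 * ∑ i, ∑ j, potentialSH g ε (v i j) := by
  have abs_pow_four : ∀ x : ℝ, |x| ^ 4 = x ^ 4 := fun x => Even.pow_abs ⟨2, rfl⟩ x
  simp only [dEnergy, dInner, potentialSH, abs_pow_four, ← pow_succ, ← sq,
    sum_sub_distrib, ← sum_div, ← mul_sum]
  ring

theorem sum_potentialSH_sub_le (u m : ZMod M → ZMod M → ℝ) (τ : ℝ) :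
    h ^ 2 * ∑ i, ∑ j, potentialSH g ε (u i j) - h ^ 2 * ∑ i, ∑ j, potentialSH g ε ((u + τ • m) i j)
      ≤ -τ * dInner M h (fPt g ε M u) m + (g ^ 2 / 6 + ε / 2) * τ ^ 2 * dInner M h m m := by
  calc _ = h ^ 2 * ∑ i, ∑ j, (potentialSH g ε (u i j) - potentialSH g ε (u i j + τ * m i j)) := by
        simp only [Pi.add_apply, Pi.smul_apply, smul_eq_mul, sum_sub_distrib, mul_sub]
    _ ≤ h ^ 2 * ∑ i, ∑ j, (-((u i j ^ 3 - g * u i j ^ 2 - ε * u i j) * (τ * m i j))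
          + (g ^ 2 / 6 + ε / 2) * (τ * m i j) ^ 2) := by
        gcongr with i _ j _
        exact potentialSH_sub_le g ε (u i j) (τ * m i j)
    _ = _ := by
        simp only [dInner, fPt, mul_sum, ← sum_add_distrib]
        refine sum_congr rfl fun i _ => sum_congr rfl fun j _ => ?_
        ring

theorem dEnergy_sub_dEnergy_add_smul_muSH_le (u : ZMod M → ZMod M → ℝ) (τ : ℝ) :
    dEnergy M h g ε u - dEnergy M h g ε (u + τ • muSH M h g ε u)
      ≤ -(τ * (1 - (g ^ 2 / 6 + ε / 2) * τ)) * dInner M h (muSH M h g ε u) (muSH M h g ε u) := by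
  set μ := muSH M h g ε u
  have hμ : dInner M h μ μ = dInner M h (opA M h (opA M h u)) μ + dInner M h (fPt g ε M u) μ :=
    dInner_add_left h _ _ μ
  have hquad : dInner M h (opA M h (u + τ • μ)) (opA M h (u + τ • μ))
      = dInner M h (opA M h u) (opA M h u) + 2 * τ * dInner M h (opA M h (opA M h u)) μ
        + τ ^ 2 * dInner M h (opA M h μ) (opA M h μ) := by
    rw [opA_add_smul, dInner_add_smul_self, dInner_opA_left h (opA M h u) μ]
  have hτμ : τ * dInner M h μ μ
      = τ * dInner M h (opA M h (opA M h u)) μ + τ * dInner M h (fPt g ε M u) μ := by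
    rw [hμ, mul_add]
  rw [dEnergy_eq, dEnergy_eq, hquad]
  linarith [sum_potentialSH_sub_le h (g := g) (ε := ε) u μ τ,
    mul_nonneg (sq_nonneg τ) (dInner_self_nonneg h (opA M h μ))]

theorem backwardEuler_step_dissipation (u : ZMod M → ZMod M → ℝ) {τ : ℝ} (hτ : 0 < τ)
    (hstep : τ * (g ^ 2 / 3 + ε) ≤ 1) :
    (dEnergy M h g ε u - dEnergy M h g ε (u + τ • muSH M h g ε u)) / τ
      + 1 / 2 * dInner M h (muSH M h g ε u) (muSH M h g ε u) ≤ 0 := by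
  have hμ := dInner_self_nonneg h (muSH M h g ε u)
  have hE := dEnergy_sub_dEnergy_add_smul_muSH_le h (g := g) (ε := ε) u τ
  rw [div_add' _ _ _ hτ.ne']
  refine div_nonpos_of_nonpos_of_nonneg ?_ hτ.le
  linarith [mul_nonneg (mul_nonneg hτ.le hμ) (sub_nonneg.mpr hstep)]

end Grid

theorem backward_Euler_energy_dissipation_general
    (L : ℝ) (M : ℕ) [NeZero M]
    (g ε : ℝ)
    (N : ℕ)
    (t : ℕ → ℝ)
    (htmono : ∀ k, k < N → t k < t (k + 1))
    (hτ : ∀ k, 1 ≤ k → k ≤ N → t k - t (k - 1) ≤ 3 / (4 * g ^ 2 + 3 * ε))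
    (u : ℕ → ZMod M → ZMod M → ℝ)
    (hscheme : ∀ n, 1 ≤ n → n ≤ N →
      (1 / (t n - t (n - 1))) • (u n - u (n - 1)) = -(muSH M (L / M) g ε (u n))) :
    ∀ n, 1 ≤ n → n ≤ N →
      (dEnergy M (L / M) g ε (u n) - dEnergy M (L / M) g ε (u (n - 1))) / (t n - t (n - 1))
          + (1 / 2) * dInner M (L / M) (muSH M (L / M) g ε (u n)) (muSH M (L / M) g ε (u n))
        ≤ 0 := by
  intro n hn hnN
  have hτ_pos : 0 < t n - t (n - 1) := by
    have hlt := htmono (n - 1) (by omega)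
    rw [Nat.sub_add_cancel hn] at hlt
    exact sub_pos.mpr hlt
  have hstep : (t n - t (n - 1)) * (g ^ 2 / 3 + ε) ≤ 1 := by
    have hτn := hτ n hn hnN
    have hD : 0 < 4 * g ^ 2 + 3 * ε :=
      (div_pos_iff_of_pos_left three_pos).mp (hτ_pos.trans_le hτn)
    linarith [(le_div_iff₀ hD).mp hτn, mul_nonneg hτ_pos.le (sq_nonneg g)]
  have hprev : u (n - 1) = u n + (t n - t (n - 1)) • muSH M (L / M) g ε (u n) := by
    have hs := hscheme n hn hnN
    rw [one_div, inv_smul_eq_iff₀ hτ_pos.ne'] at hs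
    linear_combination (norm := module) -hs
  rw [hprev]
  exact backwardEuler_step_dissipation _ (u n) hτ_pos hstep

/-- energy dissipation of the variable-step backward Euler scheme for the
classical Swift–Hohenberg equation: if `τ ≤ 3/(4g²+3ε)` and `(uⁿ - u^{n-1})/τ_n = -μⁿ`,
then `(E[uⁿ] - E[u^{n-1}])/τ_n + ½‖μⁿ‖² ≤ 0`. -/
theorem backward_Euler_energy_dissipation
    (L : ℝ) (hL : 0 < L) (M : ℕ) [NeZero M] (hM : 2 ≤ M)
    (g ε : ℝ) (hg : 0 ≤ g) (hε : 0 < ε)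
    (N : ℕ) (T : ℝ)
    (t : ℕ → ℝ) (ht0 : t 0 = 0) (htN : t N = T)
    (htmono : ∀ k, k < N → t k < t (k + 1))
    (hτ : ∀ k, 1 ≤ k → k ≤ N → t k - t (k - 1) ≤ 3 / (4 * g ^ 2 + 3 * ε))
    (u : ℕ → ZMod M → ZMod M → ℝ)
    (hscheme : ∀ n, 1 ≤ n → n ≤ N →
      (1 / (t n - t (n - 1))) • (u n - u (n - 1)) = -(muSH M (L / M) g ε (u n))) :
    ∀ n, 1 ≤ n → n ≤ N →
      (dEnergy M (L / M) g ε (u n) - dEnergy M (L / M) g ε (u (n - 1))) / (t n - t (n - 1))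
          + (1 / 2) * dInner M (L / M) (muSH M (L / M) g ε (u n)) (muSH M (L / M) g ε (u n))
        ≤ 0 :=
  backward_Euler_energy_dissipation_general L M g ε N t htmono hτ u hscheme
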